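/- If I ≤_RK J are F_σ ideals and J is nonpathological (J = Fin(ψ) for some nonpathological lscsm ψ), then I is nonpathological. -/

import Mathlib

/-!
The witness is the pullback `χ A = ψ (f ⁻¹' A)`, whose finite sets are exactly the members of `I`.
It is lower semicontinuous because `f` maps each initial segment into an initial segment, and it is
nonpathological because a measure dominated by `ψ` pushes forward along `f` to a measure dominated
by `χ` that gives `A` the same mass as the original gives `f ⁻¹' A`.
-/

open scoped ENNReal

/-- A lower semicontinuous submeasure on ℕ. -/
def IsLSCSM (φ : Set ℕ → ℝ≥0∞) : Prop :=
  φ ∅ = 0 ∧ (∀ A B : Set ℕ, A ⊆ B → φ A ≤ φ B) ∧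
    (∀ A B : Set ℕ, φ (A ∪ B) ≤ φ A + φ B) ∧
    (∀ n : ℕ, φ {n} < ⊤) ∧
    (∀ A : Set ℕ, φ A = ⨆ n : ℕ, φ (A ∩ Set.Iic n))

/-- φ̂, the supremum of all measures dominated by φ. -/
noncomputable def hatSM (φ : Set ℕ → ℝ≥0∞) (A : Set ℕ) : ℝ≥0∞ :=
  ⨆ (m : ℕ → ℝ≥0∞) (_ : ∀ S : Set ℕ, (∑' n : S, m n) ≤ φ S), ∑' n : A, m n

/-- An ideal on ℕ containing all finite sets. -/
def IsIdeal (I : Set (Set ℕ)) : Prop :=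
  ∅ ∈ I ∧ Set.univ ∉ I ∧ (∀ A ∈ I, ∀ B : Set ℕ, B ⊆ A → B ∈ I) ∧
    (∀ A ∈ I, ∀ B ∈ I, A ∪ B ∈ I) ∧ (∀ n : ℕ, {n} ∈ I)

theorem ENNReal.tsum_preimage_eq_tsum_fiber {α β : Type*} (f : α → β) (m : α → ℝ≥0∞)
    (S : Set β) : ∑' a : f ⁻¹' S, m a = ∑' b : S, ∑' a : f ⁻¹' {(b : β)}, m a := by
  rw [tsum_subtype, tsum_subtype S fun b => ∑' a : f ⁻¹' {b}, m a, ← ENNReal.tsum_fiberwise _ f]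
  refine tsum_congr fun b => ?_
  by_cases hb : b ∈ S
  · rw [Set.indicator_of_mem hb]
    refine tsum_congr fun a => Set.indicator_of_mem ?_ m
    rwa [Set.mem_preimage, a.2]
  · rw [Set.indicator_of_notMem hb]
    refine ENNReal.tsum_eq_zero.2 fun a => Set.indicator_of_notMem ?_ m
    rwa [Set.mem_preimage, a.2]

theorem hatSM_le_self (φ : Set ℕ → ℝ≥0∞) (A : Set ℕ) : hatSM φ A ≤ φ A :=
  iSup₂_le fun _ hm => hm A

theorem hatSM_preimage_le (ψ : Set ℕ → ℝ≥0∞) (f : ℕ → ℕ) (A : Set ℕ) :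
    hatSM ψ (f ⁻¹' A) ≤ hatSM (fun B => ψ (f ⁻¹' B)) A := by
  refine iSup₂_le fun m hm => ?_
  let pushforward : ℕ → ℝ≥0∞ := fun k => ∑' n : f ⁻¹' {k}, m n
  have hdom : ∀ S : Set ℕ, ∑' k : S, pushforward k ≤ ψ (f ⁻¹' S) := fun S =>
    (ENNReal.tsum_preimage_eq_tsum_fiber f m S).symm.trans_le (hm _)
  rw [ENNReal.tsum_preimage_eq_tsum_fiber]
  exact le_iSup₂_of_le pushforward hdom le_rfl

theorem IsLSCSM.comp_preimage {ψ : Set ℕ → ℝ≥0∞} (hψ : IsLSCSM ψ) (f : ℕ → ℕ)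
    (hfin : ∀ n, ψ (f ⁻¹' {n}) < ⊤) : IsLSCSM fun A => ψ (f ⁻¹' A) := by
  obtain ⟨hempty, hmono, hsubadd, -, hlsc⟩ := hψ
  refine ⟨hempty, fun A B hAB => hmono _ _ (Set.preimage_mono hAB),
    fun A B => hsubadd (f ⁻¹' A) (f ⁻¹' B), hfin, fun A => le_antisymm ?_ ?_⟩
  · show ψ (f ⁻¹' A) ≤ ⨆ n, ψ (f ⁻¹' (A ∩ Set.Iic n))
    rw [hlsc (f ⁻¹' A)]
    refine iSup_le fun n => ?_
    obtain ⟨M, hM⟩ := ((Set.finite_Iic n).image f).bddAbove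
    refine (hmono _ _ ?_).trans (le_iSup (fun k => ψ (f ⁻¹' (A ∩ Set.Iic k))) M)
    exact fun x ⟨hxA, hxn⟩ => ⟨hxA, hM (Set.mem_image_of_mem f hxn)⟩
  · exact iSup_le fun n => hmono _ _ (Set.preimage_mono Set.inter_subset_left)

theorem comp_preimage_eq_hatSM {ψ : Set ℕ → ℝ≥0∞} (hψ : ∀ A, ψ A = hatSM ψ A) (f : ℕ → ℕ)
    (A : Set ℕ) : ψ (f ⁻¹' A) = hatSM (fun B => ψ (f ⁻¹' B)) A :=
  le_antisymm ((hψ _).trans_le (hatSM_preimage_le ψ f A)) (hatSM_le_self _ A)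

theorem stmt10_general (I J : Set (Set ℕ)) (hIid : IsIdeal I)
    (f : ℕ → ℕ) (hRK : I = {A : Set ℕ | f ⁻¹' A ∈ J})
    (ψ : Set ℕ → ℝ≥0∞) (hψ : IsLSCSM ψ)
    (hnonpath : ∀ A : Set ℕ, ψ A = hatSM ψ A)
    (hJ : J = {A : Set ℕ | ψ A < ⊤}) :
    ∃ χ : Set ℕ → ℝ≥0∞, IsLSCSM χ ∧ (∀ A : Set ℕ, χ A = hatSM χ A) ∧
      I = {A : Set ℕ | χ A < ⊤} := by
  subst hJ
  have hI : I = {A : Set ℕ | ψ (f ⁻¹' A) < ⊤} := hRK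
  have hfin : ∀ n, ψ (f ⁻¹' {n}) < ⊤ := fun n => by
    simpa only [hI, Set.mem_ofPred_eq] using hIid.2.2.2.2 n
  exact ⟨_, hψ.comp_preimage f hfin, comp_preimage_eq_hatSM hnonpath f, hI⟩

theorem stmt10 (I J : Set (Set ℕ)) (hIid : IsIdeal I) (hJid : IsIdeal J)
    (f : ℕ → ℕ) (hRK : I = {A : Set ℕ | f ⁻¹' A ∈ J})
    (ψ : Set ℕ → ℝ≥0∞) (hψ : IsLSCSM ψ)
    (hnonpath : ∀ A : Set ℕ, ψ A = hatSM ψ A)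
    (hJ : J = {A : Set ℕ | ψ A < ⊤}) :
    ∃ χ : Set ℕ → ℝ≥0∞, IsLSCSM χ ∧ (∀ A : Set ℕ, χ A = hatSM χ A) ∧
      I = {A : Set ℕ | χ A < ⊤} :=
  stmt10_general I J hIid f hRK ψ hψ hnonpath hJ
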